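/- arXiv:1904.03602 — 3 statements merged into one kernel-verified Lean document; each statement's English description precedes it below -/
import Mathlib

section
/- Let τ > 0 and Z ≥ 0. Then g̃_{τ,Z} is convex on the interval [0, ∞). -/
/-! Substituting `y = x / √(8τ)` turns `g̃_{τ,Z}` into a nonnegative multiple of
`F y = erf y * exp (y ^ 2 / 2)`. Since `erf' y = exp (-y ^ 2 / 2)`, `F` solves `F' = 1 + y F`;
on `[0, ∞)` both `y` and `F` are nonnegative and increasing, so `F'` is increasing and `F` is
convex. -/

/-- erf(x) = ∫₀ˣ exp(−s²/2) ds -/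
noncomputable def erf (x : ℝ) : ℝ := ∫ s in (0:ℝ)..x, Real.exp (-s^2/2)

/-- g̃_{τ,Z}(x) = √(τ/8)·Z·erf(x/√(8τ))·exp(x²/(16τ)) -/
noncomputable def gtilde (τ Z x : ℝ) : ℝ :=
  Real.sqrt (τ/8) * Z * erf (x / Real.sqrt (8*τ)) * Real.exp (x^2/(16*τ))

open Real Set

lemma hasDerivAt_erf (x : ℝ) : HasDerivAt erf (exp (-x ^ 2 / 2)) x := by
  have hc : Continuous fun s : ℝ => exp (-s ^ 2 / 2) := by fun_prop
  exact intervalIntegral.integral_hasDerivAt_right (hc.intervalIntegrable 0 x)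
    (hc.stronglyMeasurableAtFilter _ _) hc.continuousAt

lemma monotone_erf : Monotone erf :=
  monotone_of_hasDerivAt_nonneg hasDerivAt_erf fun _ => (exp_pos _).le

lemma erf_zero : erf 0 = 0 := intervalIntegral.integral_same

lemma erf_nonneg {x : ℝ} (hx : 0 ≤ x) : 0 ≤ erf x :=
  erf_zero ▸ monotone_erf hx

noncomputable def erfMulExp (x : ℝ) : ℝ := erf x * exp (x ^ 2 / 2)

lemma hasDerivAt_erfMulExp (x : ℝ) :
    HasDerivAt erfMulExp (1 + x * erfMulExp x) x := by
  have hexp : HasDerivAt (fun y : ℝ => exp (y ^ 2 / 2)) (exp (x ^ 2 / 2) * x) x := by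
    simpa using ((hasDerivAt_pow 2 x).div_const 2).exp
  have hcancel : exp (-x ^ 2 / 2) * exp (x ^ 2 / 2) = 1 := by
    rw [← exp_add, neg_div, neg_add_cancel, exp_zero]
  refine ((hasDerivAt_erf x).mul hexp).congr_deriv ?_
  rw [hcancel, erfMulExp]
  ring

lemma erfMulExp_nonneg {x : ℝ} (hx : 0 ≤ x) : 0 ≤ erfMulExp x :=
  mul_nonneg (erf_nonneg hx) (exp_pos _).le

lemma monotoneOn_erfMulExp : MonotoneOn erfMulExp (Ici 0) := by
  refine (monotone_erf.monotoneOn _).mul ?_ (fun x hx => erf_nonneg hx)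
    (fun _ _ => (exp_pos _).le)
  exact fun x hx y _ hxy => exp_le_exp.2 (by gcongr)

lemma convexOn_erfMulExp : ConvexOn ℝ (Ici 0) erfMulExp := by
  have hderiv : deriv erfMulExp = fun x => 1 + x * erfMulExp x :=
    funext fun x => (hasDerivAt_erfMulExp x).deriv
  refine MonotoneOn.convexOn_of_deriv (convex_Ici 0)
    (fun x _ => (hasDerivAt_erfMulExp x).continuousAt.continuousWithinAt)
    (fun x _ => (hasDerivAt_erfMulExp x).differentiableAt.differentiableWithinAt) ?_
  have hmono : MonotoneOn (fun x => 1 + x * erfMulExp x) (Ici 0) := fun x hx y hy hxy =>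
    add_le_add_right (mul_le_mul hxy (monotoneOn_erfMulExp hx hy hxy) (erfMulExp_nonneg hx) hy) 1
  rw [hderiv]
  exact hmono.mono interior_subset

lemma ConvexOn.comp_const_mul_Ici {f : ℝ → ℝ} (hf : ConvexOn ℝ (Ici 0) f) {a : ℝ} (ha : 0 < a) :
    ConvexOn ℝ (Ici 0) fun x => f (a * x) := by
  have hpre : LinearMap.mulLeft ℝ a ⁻¹' Ici 0 = Ici 0 := by
    ext x
    simp [mul_nonneg_iff_of_pos_left ha]
  simpa [hpre, Function.comp_def] using hf.comp_linearMap (LinearMap.mulLeft ℝ a)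

lemma gtilde_eq (τ Z : ℝ) (hτ : 0 < τ) :
    gtilde τ Z = fun x => (√(τ / 8) * Z) * erfMulExp ((√(8 * τ))⁻¹ * x) := by
  have hsq : √(8 * τ) ^ 2 = 8 * τ := sq_sqrt (by positivity)
  ext x
  rw [gtilde, erfMulExp, mul_pow, inv_pow, hsq]
  ring_nf

theorem stmt_2 (τ Z : ℝ) (hτ : 0 < τ) (hZ : 0 ≤ Z) :
    ConvexOn ℝ (Set.Ici (0:ℝ)) (gtilde τ Z) := by
  rw [gtilde_eq τ Z hτ]
  exact (convexOn_erfMulExp.comp_const_mul_Ici (by positivity)).smul (by positivity)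
end

section
/- Let τ ≥ 8e and 0 < Z ≤ 1/e. Then the unique U_{τ,Z} > 0 with g̃_{τ,Z}(U_{τ,Z}) = 1 satisfies U_{τ,Z} ≤ √(16·τ·ln(1/Z)). Equivalently, g̃_{τ,Z}(√(16·τ·ln(1/Z))) ≥ 1. -/
/-!
At `x = √(16 τ log (1/Z))` the exponential factor of `g̃` is exactly `1/Z`, cancelling `Z`, and the
argument of `erf` is `√(2 log (1/Z)) ≥ 1`. Since `erf 1 ≥ e^{-1/2}` (the integrand is at least
`e^{-1/2}` on `[0, 1]`) and `√(τ/8) ≥ e^{1/2}`, the value there is at least `1`. As `g̃` is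
continuous and strictly increasing on `[0, ∞)` with `g̃(0) = 0`, the intermediate value theorem
gives the unique root, and monotonicity bounds it by that point.
-/

open Real Set

lemma intervalIntegrable_exp_neg_sq_div_two (a b : ℝ) :
    IntervalIntegrable (fun s : ℝ => exp (-s ^ 2 / 2)) MeasureTheory.volume a b :=
  (by fun_prop : Continuous fun s : ℝ => exp (-s ^ 2 / 2)).intervalIntegrable a b

@[fun_prop]
lemma continuous_erf : Continuous erf :=
  intervalIntegral.continuous_primitive intervalIntegrable_exp_neg_sq_div_two 0

lemma erf_strictMono : StrictMono erf := by
  intro a b hab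
  have hsplit := intervalIntegral.integral_add_adjacent_intervals
    (intervalIntegrable_exp_neg_sq_div_two 0 a) (intervalIntegrable_exp_neg_sq_div_two a b)
  have hpos : 0 < ∫ s in a..b, exp (-s ^ 2 / 2) :=
    intervalIntegral.intervalIntegral_pos_of_pos_on
      (intervalIntegrable_exp_neg_sq_div_two a b) (fun _ _ => exp_pos _) hab
  unfold erf
  linarith

lemma exp_neg_half_le_erf_one : exp (-1 / 2) ≤ erf 1 := by
  have hmono : ∫ _ in (0:ℝ)..1, exp (-1 / 2) ≤ ∫ s in (0:ℝ)..1, exp (-s ^ 2 / 2) :=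
    intervalIntegral.integral_mono_on zero_le_one intervalIntegrable_const
      (intervalIntegrable_exp_neg_sq_div_two 0 1)
      fun s hs => exp_le_exp.mpr (by nlinarith [hs.1, hs.2])
  simpa [erf] using hmono

lemma gtilde_zero (τ Z : ℝ) : gtilde τ Z 0 = 0 := by
  simp [gtilde, erf_zero]

lemma continuous_gtilde (τ Z : ℝ) : Continuous (gtilde τ Z) := by
  unfold gtilde
  fun_prop

lemma strictMonoOn_gtilde {τ Z : ℝ} (hτ : 0 < τ) (hZ : 0 < Z) :
    StrictMonoOn (gtilde τ Z) (Ici 0) := by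
  intro a ha b hb hab
  have hc : 0 < √(τ / 8) * Z := by positivity
  have herf : erf (a / √(8 * τ)) < erf (b / √(8 * τ)) := erf_strictMono (by gcongr)
  have hexp : exp (a ^ 2 / (16 * τ)) ≤ exp (b ^ 2 / (16 * τ)) := by gcongr
  exact mul_lt_mul (mul_lt_mul_of_pos_left herf hc) hexp (exp_pos _)
    (mul_nonneg hc.le (erf_nonneg (div_nonneg hb (sqrt_nonneg _))))

lemma gtilde_sqrt_mul {τ L : ℝ} (Z : ℝ) (hτ : 0 < τ) (hL : 0 ≤ L) :
    gtilde τ Z √(16 * τ * L) = √(τ / 8) * Z * erf √(2 * L) * exp L := by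
  have harg : √(16 * τ * L) / √(8 * τ) = √(2 * L) := by
    rw [← sqrt_div (by positivity)]
    congr 1
    field_simp
    ring
  have hexp : √(16 * τ * L) ^ 2 / (16 * τ) = L := by
    rw [sq_sqrt (by positivity)]
    field_simp
  rw [gtilde, harg, hexp]

lemma existsUnique_pos_eq_of_strictMonoOn {f : ℝ → ℝ} {c M : ℝ} (hf : StrictMonoOn f (Ici 0))
    (hcont : ContinuousOn f (Icc 0 M)) (hM : 0 ≤ M) (hf0 : f 0 < c) (hfM : c ≤ f M) :
    ∃! U, 0 < U ∧ f U = c := by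
  obtain ⟨U, hU, hfU⟩ := intermediate_value_Icc hM hcont ⟨hf0.le, hfM⟩
  have hU0 : 0 < U := hU.1.lt_of_ne (by rintro rfl; exact hf0.ne hfU)
  refine ⟨U, ⟨hU0, hfU⟩, fun V ⟨hV0, hfV⟩ => ?_⟩
  exact hf.injOn (mem_Ici.mpr hV0.le) (mem_Ici.mpr hU0.le) (hfV.trans hfU.symm)

lemma one_le_gtilde_sqrt_log {τ Z : ℝ} (hτ : 8 * exp 1 ≤ τ) (hZ : 0 < Z) (hZ1 : Z ≤ 1 / exp 1) :
    1 ≤ gtilde τ Z √(16 * τ * log (1 / Z)) := by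
  have hτ0 : 0 < τ := lt_of_lt_of_le (by positivity) hτ
  have hL : 1 ≤ log (1 / Z) :=
    (le_log_iff_exp_le (by positivity)).mpr ((le_one_div hZ (exp_pos 1)).mp hZ1)
  have hsqrt : exp (1 / 2) ≤ √(τ / 8) := by
    rw [exp_half]
    exact sqrt_le_sqrt (by linarith)
  have herf : exp (-1 / 2) ≤ erf √(2 * log (1 / Z)) :=
    exp_neg_half_le_erf_one.trans (erf_strictMono.monotone (one_le_sqrt.mpr (by linarith)))
  rw [gtilde_sqrt_mul Z hτ0 (by linarith), exp_log (by positivity)]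
  calc (1 : ℝ) = exp (1 / 2) * exp (-1 / 2) := by rw [← exp_add]; norm_num
    _ ≤ √(τ / 8) * erf √(2 * log (1 / Z)) := by gcongr
    _ = √(τ / 8) * Z * erf √(2 * log (1 / Z)) * (1 / Z) := by field_simp

theorem stmt_3 (τ Z : ℝ) (hτ : 8 * Real.exp 1 ≤ τ)
    (hZ : 0 < Z) (hZ1 : Z ≤ 1 / Real.exp 1) :
    (∃! U : ℝ, 0 < U ∧ gtilde τ Z U = 1) ∧
    (∀ U : ℝ, 0 < U → gtilde τ Z U = 1 →
      U ≤ Real.sqrt (16 * τ * Real.log (1/Z))) ∧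
    1 ≤ gtilde τ Z (Real.sqrt (16 * τ * Real.log (1/Z))) := by
  have hmono := strictMonoOn_gtilde (lt_of_lt_of_le (by positivity) hτ) hZ
  have key := one_le_gtilde_sqrt_log hτ hZ hZ1
  refine ⟨existsUnique_pos_eq_of_strictMonoOn hmono (continuous_gtilde τ Z).continuousOn
    (sqrt_nonneg _) (by rw [gtilde_zero]; exact one_pos) key, fun U hU hgU => ?_, key⟩
  exact (hmono.le_iff_le (mem_Ici.mpr hU.le) (mem_Ici.mpr (sqrt_nonneg _))).mp (hgU ▸ key)
end

section
/- (Adversarial loss sequence forcing large loss.) Let T ∈ ℕ and M > 0 with 4·M a positive integer and T ≥ 4·M. Let z be a deterministic strategy for the two-action online problem: for each t ∈ {1, …, T}, the prediction z_t ∈ [0, 1] is a function of the previously revealed losses l₁, …, l_{t−1} ∈ [0,1]². Suppose that for every loss sequence l₁, …, l_T ∈ [0,1]², Σ_{t=1}^T ((1 − z_t)·l_t(0) + z_t·l_t(1)) ≤ min_{i∈{0,1}} Σ_{t=1}^T l_t(i) + M. Then there exists a loss sequence with every l_t ∈ {(0,1), (1,0), (1/2,1/2)} for which Σ_{t=1}^T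 ((1 − z_t)·l_t(0) + z_t·l_t(1)) ≥ T/2 + M·2^{−4M}. -/
/-!
Rounds `1, …, m` with `m = 4M` receive the loss vector `(0,1)` or `(1,0)` according to a bit
string `σ`, later rounds receive `(1/2,1/2)`. Flipping the bit of round `t` leaves the prediction
of round `t` unchanged, since it only sees earlier rounds, but swaps the two loss vectors; hence the
learner's excess loss over `T/2`, summed over all `2^m` bit strings, vanishes. On the all-`(0,1)`
string the regret bound caps the excess at `M - m/2 = -M`, so some string has excess at least
`M / 2^m`.
-/

open Finset

noncomputable section

def roundLoss (z : ℝ) (x : ℝ × ℝ) : ℝ := (1 - z) * x.1 + z * x.2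

lemma roundLoss_half (z : ℝ) : roundLoss z (1/2, 1/2) = 1/2 := by
  simp only [roundLoss]; ring

def bitLoss : Bool → ℝ × ℝ
  | true => (0, 1)
  | false => (1, 0)

lemma roundLoss_bitLoss_add_not (z : ℝ) (b : Bool) :
    roundLoss z (bitLoss b) + roundLoss z (bitLoss (!b)) = 1 := by
  cases b <;> simp only [roundLoss, bitLoss, Bool.not_true, Bool.not_false] <;> ring

def IsCausal (S : ℕ → (ℕ → ℝ × ℝ) → ℝ) : Prop :=
  ∀ t l l', (∀ s, 1 ≤ s → s < t → l s = l' s) → S t l = S t l'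

def advLoss (m : ℕ) (σ : Fin m → Bool) (t : ℕ) : ℝ × ℝ :=
  if h : 1 ≤ t ∧ t ≤ m then bitLoss (σ ⟨t - 1, by omega⟩) else (1/2, 1/2)

section advLoss

variable {m : ℕ} (σ : Fin m → Bool)

lemma advLoss_mem (t : ℕ) :
    advLoss m σ t ∈ ({((0:ℝ), (1:ℝ)), (1, 0), (1/2, 1/2)} : Set (ℝ × ℝ)) := by
  unfold advLoss
  split
  · cases σ _ <;> simp [bitLoss]
  · simp

lemma advLoss_mem_Icc (t : ℕ) :
    (advLoss m σ t).1 ∈ Set.Icc (0:ℝ) 1 ∧ (advLoss m σ t).2 ∈ Set.Icc (0:ℝ) 1 := by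
  obtain h | h | h := advLoss_mem σ t <;> rw [h] <;> norm_num

lemma advLoss_of_mem {t : ℕ} (ht : t ∈ Icc 1 m) :
    advLoss m σ t = bitLoss (σ ⟨t - 1, by grind⟩) :=
  dif_pos (mem_Icc.mp ht)

lemma advLoss_of_lt {t : ℕ} (ht : m < t) : advLoss m σ t = (1/2, 1/2) :=
  dif_neg (by omega)

lemma IsCausal.apply_advLoss_update {S : ℕ → (ℕ → ℝ × ℝ) → ℝ} (hS : IsCausal S)
    {t : ℕ} (j : Fin m) (hj : t ≤ j + 1) (b : Bool) :
    S t (advLoss m (Function.update σ j b)) = S t (advLoss m σ) := by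
  refine hS t _ _ fun s hs hst => ?_
  unfold advLoss
  split_ifs
  · rw [Function.update_of_ne (by grind)]
  · rfl

end advLoss

def excessLoss (S : ℕ → (ℕ → ℝ × ℝ) → ℝ) (m : ℕ) (σ : Fin m → Bool) : ℝ :=
  ∑ t ∈ Icc 1 m, (roundLoss (S t (advLoss m σ)) (advLoss m σ t) - 1/2)

lemma sum_roundLoss_advLoss_sub_half_eq_zero {S : ℕ → (ℕ → ℝ × ℝ) → ℝ} (hS : IsCausal S)
    {m t : ℕ} (ht : t ∈ Icc 1 m) :
    ∑ σ : Fin m → Bool, (roundLoss (S t (advLoss m σ)) (advLoss m σ t) - 1/2) = 0 := by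
  set j : Fin m := ⟨t - 1, by grind⟩
  let flip (σ : Fin m → Bool) : Fin m → Bool := Function.update σ j (!σ j)
  refine sum_involution (fun σ _ => flip σ) (fun σ _ => ?_) (fun σ _ _ h => ?_)
    (fun _ _ => mem_univ _) (fun σ _ => by simp [flip])
  · rw [hS.apply_advLoss_update σ j (by grind), advLoss_of_mem _ ht, advLoss_of_mem _ ht]
    simp only [flip, j, Function.update_self]
    linarith [roundLoss_bitLoss_add_not (S t (advLoss m σ)) (σ j)]
  · simpa [flip] using congrFun h j

lemma sum_excessLoss_eq_zero {S : ℕ → (ℕ → ℝ × ℝ) → ℝ} (hS : IsCausal S) (m : ℕ) :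
    ∑ σ : Fin m → Bool, excessLoss S m σ = 0 := by
  simp only [excessLoss]
  rw [sum_comm]
  exact sum_eq_zero fun t ht => sum_roundLoss_advLoss_sub_half_eq_zero hS ht

lemma sum_Icc_one_eq_add_half {g : ℕ → ℝ} {m T : ℕ} (hmT : m ≤ T)
    (hg : ∀ t, m < t → g t = 1/2) :
    ∑ t ∈ Icc 1 T, g t = ∑ t ∈ Icc 1 m, g t + (T - m) / 2 := by
  have h : ∑ t ∈ Icc 1 T, (g t - 1/2) = ∑ t ∈ Icc 1 m, (g t - 1/2) :=
    (sum_subset (Icc_subset_Icc_right hmT) fun t ht ht' => by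
      rw [hg t (by grind), sub_self]).symm
  simp only [sum_sub_distrib, sum_const, Nat.card_Icc, add_tsub_cancel_right, nsmul_eq_mul] at h
  linarith

lemma sum_roundLoss_advLoss (S : ℕ → (ℕ → ℝ × ℝ) → ℝ) {m T : ℕ} (hmT : m ≤ T)
    (σ : Fin m → Bool) :
    ∑ t ∈ Icc 1 T, roundLoss (S t (advLoss m σ)) (advLoss m σ t) = T / 2 + excessLoss S m σ := by
  rw [sum_Icc_one_eq_add_half hmT fun t ht => by rw [advLoss_of_lt σ ht, roundLoss_half]]
  simp only [excessLoss, sum_sub_distrib, sum_const, Nat.card_Icc, add_tsub_cancel_right,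
    nsmul_eq_mul]
  ring

lemma sum_advLoss_true_fst {m T : ℕ} (hmT : m ≤ T) :
    ∑ t ∈ Icc 1 T, (advLoss m (fun _ => true) t).1 = (T - m) / 2 := by
  rw [sum_Icc_one_eq_add_half hmT fun t ht => by rw [advLoss_of_lt _ ht],
    sum_eq_zero fun t ht => by rw [advLoss_of_mem _ ht, bitLoss], zero_add]

lemma exists_div_card_le_of_sum_eq_zero {α : Type*} [Fintype α] {E : α → ℝ}
    (hE : ∑ a, E a = 0) {a₀ : α} {M : ℝ} (hM : 0 < M) (h₀ : E a₀ ≤ -M) :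
    ∃ a, M / Fintype.card α ≤ E a := by
  classical
  by_contra! h
  have hpos : 0 < Fintype.card α := Fintype.card_pos_iff.mpr ⟨a₀⟩
  have hrest : ∑ a ∈ univ.erase a₀, E a ≤ (Fintype.card α - 1) * (M / Fintype.card α) :=
    calc _ ≤ ∑ a ∈ univ.erase a₀, M / Fintype.card α := sum_le_sum fun a _ => (h a).le
      _ = _ := by
        rw [sum_const, card_erase_of_mem (mem_univ _), card_univ, nsmul_eq_mul,
          Nat.cast_pred hpos]
  have hlt : (Fintype.card α - 1) * (M / Fintype.card α) < M := by
    rw [mul_div_assoc', div_lt_iff₀ (by positivity)]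
    linarith
  linarith [add_sum_erase univ E (mem_univ a₀)]

theorem stmt_18_general (T : ℕ) (M : ℝ) (hM : 0 < M)
    (hMint : ∃ m : ℕ, 0 < m ∧ (m : ℝ) = 4 * M)
    (hTM : 4 * M ≤ (T : ℝ))
    (S : ℕ → (ℕ → ℝ × ℝ) → ℝ)
    (hdep : ∀ t : ℕ, ∀ l l' : ℕ → ℝ × ℝ,
      (∀ s, 1 ≤ s → s < t → l s = l' s) → S t l = S t l')
    (hregret : ∀ l : ℕ → ℝ × ℝ,
      (∀ t, 1 ≤ t → t ≤ T →
        (l t).1 ∈ Set.Icc (0:ℝ) 1 ∧ (l t).2 ∈ Set.Icc (0:ℝ) 1) →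
      (∑ t ∈ Finset.Icc 1 T, ((1 - S t l) * (l t).1 + S t l * (l t).2))
        ≤ min (∑ t ∈ Finset.Icc 1 T, (l t).1)
              (∑ t ∈ Finset.Icc 1 T, (l t).2) + M) :
    ∃ l : ℕ → ℝ × ℝ,
      (∀ t, 1 ≤ t → t ≤ T →
        l t ∈ ({((0:ℝ), (1:ℝ)), (1, 0), (1/2, 1/2)} : Set (ℝ × ℝ))) ∧
      (∑ t ∈ Finset.Icc 1 T, ((1 - S t l) * (l t).1 + S t l * (l t).2))
        ≥ (T : ℝ) / 2 + M * (2 : ℝ) ^ (-(4 * M)) := by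
  obtain ⟨m, -, hm⟩ := hMint
  have hmT : m ≤ T := by exact_mod_cast hm ▸ hTM
  have h₀ : excessLoss S m (fun _ => true) ≤ -M := by
    have hreg : ∑ t ∈ Icc 1 T,
        roundLoss (S t (advLoss m fun _ => true)) (advLoss m (fun _ => true) t) ≤ _ :=
      hregret _ fun t _ _ => advLoss_mem_Icc _ t
    rw [sum_roundLoss_advLoss S hmT, sum_advLoss_true_fst hmT] at hreg
    linarith [min_le_left ((T - m : ℝ) / 2) (∑ t ∈ Icc 1 T, (advLoss m (fun _ => true) t).2)]
  obtain ⟨σ, hσ⟩ := exists_div_card_le_of_sum_eq_zero (sum_excessLoss_eq_zero hdep m) hM h₀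
  refine ⟨advLoss m σ, fun t _ _ => advLoss_mem σ t, ?_⟩
  have hcard : M / Fintype.card (Fin m → Bool) = M * (2 : ℝ) ^ (-(4 * M)) := by
    rw [← hm, Real.rpow_neg zero_le_two, Real.rpow_natCast]
    simp [div_eq_mul_inv]
  change _ ≤ ∑ t ∈ Icc 1 T, roundLoss (S t (advLoss m σ)) (advLoss m σ t)
  rw [sum_roundLoss_advLoss S hmT, ← hcard]
  linarith

/-- Adversarial loss sequence forcing large loss on any low-regret
two-action strategy. The strategy `S t l` gives the prediction at round `t`
as a function of the loss sequence `l`, and may only depend on the losses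
of rounds `1, …, t−1`. -/
theorem stmt_18 (T : ℕ) (M : ℝ) (hM : 0 < M)
    (hMint : ∃ m : ℕ, 0 < m ∧ (m : ℝ) = 4 * M)
    (hTM : 4 * M ≤ (T : ℝ))
    (S : ℕ → (ℕ → ℝ × ℝ) → ℝ)
    (hdep : ∀ t : ℕ, ∀ l l' : ℕ → ℝ × ℝ,
      (∀ s, 1 ≤ s → s < t → l s = l' s) → S t l = S t l')
    (hrange : ∀ t l, S t l ∈ Set.Icc (0:ℝ) 1)
    (hregret : ∀ l : ℕ → ℝ × ℝ,
      (∀ t, 1 ≤ t → t ≤ T →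
        (l t).1 ∈ Set.Icc (0:ℝ) 1 ∧ (l t).2 ∈ Set.Icc (0:ℝ) 1) →
      (∑ t ∈ Finset.Icc 1 T, ((1 - S t l) * (l t).1 + S t l * (l t).2))
        ≤ min (∑ t ∈ Finset.Icc 1 T, (l t).1)
              (∑ t ∈ Finset.Icc 1 T, (l t).2) + M) :
    ∃ l : ℕ → ℝ × ℝ,
      (∀ t, 1 ≤ t → t ≤ T →
        l t ∈ ({((0:ℝ), (1:ℝ)), (1, 0), (1/2, 1/2)} : Set (ℝ × ℝ))) ∧
      (∑ t ∈ Finset.Icc 1 T, ((1 - S t l) * (l t).1 + S t l * (l t).2))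
        ≥ (T : ℝ) / 2 + M * (2 : ℝ) ^ (-(4 * M)) :=
  stmt_18_general T M hM hMint hTM S hdep hregret
end
end
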